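/- arXiv:1409.8318 — 4 statements merged into one kernel-verified Lean document; each statement's English description precedes it below -/
import Mathlib

section
/- Let M be a weighted complete graph on a vertex set containing terminals, let u ≠ v be two terminals, let e = {u,v} be an edge of arbitrary nonnegative cost d(e), and let M_e be M with edge e added (in parallel / with cost possibly smaller). Then for every full component C, save(M, C) ≥ save(M_e, C), where save(M, C) := d(MST(M)) − d(MST(M/C)) and M/C denotes the contraction of the terminal set of C in M (equivalently, adding zero-cost edges between all pairs of terminals of C). -/
open Finset SimpleGraph

variable {V : Type*} [Fintype V] [DecidableEq V]

/-- Total cost of a finite set of edges. -/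
def edgeCost (w : Sym2 V → ℝ) (T : Finset (Sym2 V)) : ℝ := ∑ e ∈ T, w e

/-- `T` is the edge set of a tree spanning exactly the vertex set `A`. -/
def IsTreeOn (A : Finset V) (T : Finset (Sym2 V)) : Prop :=
  (∀ e ∈ T, ∀ x ∈ e, x ∈ A) ∧ (∀ e ∈ T, ¬ e.IsDiag) ∧ T.card + 1 = A.card ∧
    ∀ u ∈ A, ∀ v ∈ A, (SimpleGraph.fromEdgeSet (↑T : Set (Sym2 V))).Reachable u v

/-- Cost of a minimum spanning tree on vertex set `A` of the complete graph weighted by `w`. -/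
noncomputable def mstCostOn (w : Sym2 V → ℝ) (A : Finset V) : ℝ :=
  sInf (edgeCost w '' {T | IsTreeOn A T})

/-- All (non-loop) pairs inside `S`. -/
def Rpairs (S : Finset V) : Set (Sym2 V) := {e | ∃ u ∈ S, ∃ v ∈ S, u ≠ v ∧ e = s(u, v)}

open Classical in
/-- Contracting the vertex set `S`: add zero-cost edges between all pairs of `S`. -/
noncomputable def contractWeight (w : Sym2 V → ℝ) (S : Finset V) : Sym2 V → ℝ :=
  fun e => if e ∈ Rpairs S then 0 else w e

/-- `save(M, C)` where `M` is the complete graph on `A` weighted by `w` and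
`S` is the terminal set of the full component `C`. -/
noncomputable def saveOn (w : Sym2 V → ℝ) (A S : Finset V) : ℝ :=
  mstCostOn w A - mstCostOn (contractWeight w S) A

/-- Vertices touched by an edge set. -/
def supportOf (T : Finset (Sym2 V)) : Finset V :=
  Finset.univ.filter (fun v => ∃ e ∈ T, v ∈ e)

/-- Degree of `v` in the edge set `T`. -/
def degIn (T : Finset (Sym2 V)) (v : V) : ℕ := (T.filter (fun e => v ∈ e)).card

/-- `E` is a full component with vertex set `S` and terminal set `R`:
a tree on `S` whose set of leaves is exactly `R`. -/
def IsFullComponent (R S : Finset V) (E : Finset (Sym2 V)) : Prop :=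
  IsTreeOn S E ∧ R ⊆ S ∧ ∀ v ∈ S, (degIn E v = 1 ↔ v ∈ R)

/-- The terminals of the component with edge set `E'` w.r.t. the global terminal set `R`. -/
def compR (R : Finset V) (E' : Finset (Sym2 V)) : Finset V := supportOf E' ∩ R

/-- `E'` is a full component w.r.t. the terminal set `R`. -/
def IsFullComponentOf (R : Finset V) (E' : Finset (Sym2 V)) : Prop :=
  IsFullComponent (compR R E') (supportOf E') E'

/-- A Steiner tree for terminal set `R`: a tree containing all terminals. -/
def IsSteinerTree (R : Finset V) (T : Finset (Sym2 V)) : Prop :=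
  IsTreeOn (supportOf T ∪ R) T

/-- `P` is a decomposition of the Steiner tree `T` into full components,
each with at most `k` terminals. -/
def KDecomposition (k : ℕ) (R : Finset V) (T : Finset (Sym2 V))
    (P : Finset (Finset (Sym2 V))) : Prop :=
  (∀ E' ∈ P, IsFullComponentOf R E' ∧ (compR R E').card ≤ k) ∧
  (∀ e ∈ T, ∃! E', E' ∈ P ∧ e ∈ E') ∧ (∀ E' ∈ P, E' ⊆ T)

/-- `T` is a `k`-restricted Steiner tree. -/
def IsKRestricted (k : ℕ) (R : Finset V) (T : Finset (Sym2 V)) : Prop :=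
  ∃ P, KDecomposition k R T P

/-!
If `e` is contracted, lowering its weight leaves the contracted weights unchanged and can only
lower the uncontracted MST. Otherwise, with `a` the weights and `b` the contracted ones, `b e = a e`
and, the weights being nonnegative, `b ≤ a`; it then suffices that
`mst (a[e := t]) + mst b ≤ mst a + mst (b[e := t])`.
Take optimal trees `T₁` for `a` and `T₂` for `b[e := t]`. If `e ∉ T₂` or `e ∈ T₁`, the same two
trees already witness the inequality. Otherwise the symmetric exchange property of spanning trees
gives `x ∈ T₁ \ T₂` such that `T₁ - x + e` and `T₂ - e + x` are spanning trees, and the total cost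
changes by `b x - a x ≤ 0`.
-/

namespace SimpleGraph

variable {V : Type*} {G : SimpleGraph V}

theorem Reachable.deleteEdges_or {a b z : V} (h : G.Reachable a z) :
    (G.deleteEdges {s(a, b)}).Reachable a z ∨ (G.deleteEdges {s(a, b)}).Reachable b z := by
  classical
  obtain ⟨P, hP⟩ := h.symm.exists_isPath
  by_cases hPe : s(a, b) ∈ P.edges
  · have hb := P.snd_mem_support_of_mem_edges hPe
    have ha := Walk.endpoint_notMem_support_takeUntil hP hb (P.adj_of_mem_edges hPe).ne
    refine .inr ⟨((P.takeUntil b hb).toDeleteEdges _ fun e he => ?_).reverse⟩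
    rintro rfl
    exact ha ((P.takeUntil b hb).fst_mem_support_of_mem_edges he)
  · exact .inl ⟨(P.toDeleteEdges _ fun e he => by rintro rfl; exact hPe he).reverse⟩

theorem IsAcyclic.not_reachable_deleteEdges {u v : V} (hG : G.IsAcyclic) {P : G.Walk u v}
    (hP : P.IsPath) {e : Sym2 V} (he : e ∈ P.edges) : ¬ (G.deleteEdges {e}).Reachable u v := by
  classical
  induction e with | h a b => ?_
  rw [reachable_deleteEdges_iff_exists_walk]
  rintro ⟨Q, hQ⟩
  have hPQ : P = Q.toPath := congrArg Subtype.val ((hG.subsingleton_path u v).elim ⟨P, hP⟩ Q.toPath)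
  exact hQ (Q.edges_toPath_subset_edges (hPQ ▸ he))

end SimpleGraph

section Trees

variable {V : Type*} {A : Finset V} {T : Finset (Sym2 V)}

theorem fromEdgeSet_erase [DecidableEq V] (x : Sym2 V) :
    fromEdgeSet ↑(T.erase x) = (fromEdgeSet (T : Set (Sym2 V))).deleteEdges {x} := by
  rw [deleteEdges_fromEdgeSet, Finset.coe_erase]

theorem mem_of_mem_support_fromEdgeSet (hT : ∀ e ∈ T, ∀ x ∈ e, x ∈ A) {x y : V} (hx : x ∈ A)
    (p : (fromEdgeSet (T : Set (Sym2 V))).Walk x y) : ∀ z ∈ p.support, z ∈ A := by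
  induction p with
  | nil => simpa
  | cons h p ih =>
    simp only [Walk.support_cons, List.mem_cons, forall_eq_or_imp]
    exact ⟨hx, ih (hT _ ((fromEdgeSet_adj _).1 h).1 _ (Sym2.mem_mk_right _ _))⟩

theorem card_le_card_add_one_of_reachable (hT : ∀ e ∈ T, ∀ x ∈ e, x ∈ A) (hA : A.Nonempty)
    (hR : ∀ x ∈ A, ∀ y ∈ A, (fromEdgeSet (T : Set (Sym2 V))).Reachable x y) :
    A.card ≤ T.card + 1 := by
  set G := fromEdgeSet (T : Set (Sym2 V))
  have : Nonempty (A : Set V) := hA.coe_sort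
  have hconn : (G.induce (A : Set V)).Connected := .mk fun x y => by
    obtain ⟨p⟩ := hR x x.2 y y.2
    exact ⟨p.induce _ (mem_of_mem_support_fromEdgeSet hT x.2 p)⟩
  have hedges : Nat.card (G.induce (A : Set V)).edgeSet ≤ T.card := by
    have hGT : G.edgeSet ⊆ T := by simp [G, edgeSet_fromEdgeSet]
    rw [← Nat.card_eq_finsetCard T]
    exact Nat.card_le_card_of_injective (Set.inclusion hGT ∘ (Embedding.induce _).mapEdgeSet)
      ((Set.inclusion_injective hGT).comp (Embedding.mapEdgeSet _).injective)
  have hcard := hconn.card_vert_le_card_edgeSet_add_one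
  have hA' : Nat.card (A : Set V) = A.card := Nat.card_eq_finsetCard A
  rw [hA'] at hcard
  omega

theorem IsTreeOn.isAcyclic [DecidableEq V] (hT : IsTreeOn A T) :
    (fromEdgeSet (T : Set (Sym2 V))).IsAcyclic := by
  rw [isAcyclic_iff_forall_adj_isBridge]
  intro p q hpq
  rw [isBridge_iff]
  intro hreach
  have hmem : s(p, q) ∈ T := ((fromEdgeSet_adj _).1 hpq).1
  have hp : p ∈ A := hT.1 _ hmem p (Sym2.mem_mk_left p q)
  have hall : ∀ z ∈ A, (fromEdgeSet ↑(T.erase s(p, q))).Reachable p z := fun z hz => by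
    rw [fromEdgeSet_erase]
    exact (hT.2.2.2 p hp z hz).deleteEdges_or.elim id hreach.trans
  have hle := card_le_card_add_one_of_reachable (fun e he => hT.1 e (Finset.mem_of_mem_erase he))
    ⟨p, hp⟩ fun x hx y hy => (hall x hx).symm.trans (hall y hy)
  have := hT.2.2.1
  rw [Finset.card_erase_of_mem hmem] at hle
  have := Finset.card_pos.2 ⟨_, hmem⟩
  omega

theorem IsTreeOn.insert_erase [DecidableEq V] (hT : IsTreeOn A T) {x : Sym2 V} (hx : x ∈ T)
    {u v : V} (hu : u ∈ A) (hv : v ∈ A)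
    (huv : ¬ ((fromEdgeSet (T : Set (Sym2 V))).deleteEdges {x}).Reachable u v) :
    IsTreeOn A (insert s(u, v) (T.erase x)) := by
  induction x with | h a b => ?_
  set D := (fromEdgeSet (T : Set (Sym2 V))).deleteEdges {s(a, b)}
  set G' := fromEdgeSet (↑(insert s(u, v) (T.erase s(a, b))) : Set (Sym2 V))
  have hDG' : D ≤ G' := by
    simp only [D, G', ← fromEdgeSet_erase]
    exact fromEdgeSet_mono (by simp [Set.subset_insert])
  have hne : u ≠ v := by rintro rfl; exact huv .rfl
  have hG'uv : G'.Reachable u v := ((fromEdgeSet_adj _).2 ⟨by simp, hne⟩).reachable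
  have hnotin : s(u, v) ∉ T.erase s(a, b) := fun h => huv <| Adj.reachable <| by
    simp only [D, ← fromEdgeSet_erase, fromEdgeSet_adj]
    exact ⟨h, hne⟩
  have ha : a ∈ A := hT.1 _ hx a (Sym2.mem_mk_left a b)
  have hsplit : ∀ z ∈ A, D.Reachable a z ∨ D.Reachable b z := fun z hz =>
    (hT.2.2.2 a ha z hz).deleteEdges_or
  -- `u` and `v` lie on different sides of `s(a, b)`, so `s(u, v)` reconnects the two sides
  have hab : G'.Reachable u a ∧ G'.Reachable u b := by
    rcases hsplit u hu with hau | hbu <;> rcases hsplit v hv with hav | hbv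
    · exact absurd (hau.symm.trans hav) huv
    · exact ⟨(hau.mono hDG').symm, hG'uv.trans (hbv.mono hDG').symm⟩
    · exact ⟨hG'uv.trans (hav.mono hDG').symm, (hbu.mono hDG').symm⟩
    · exact absurd (hbu.symm.trans hbv) huv
  have hreach : ∀ z ∈ A, G'.Reachable u z := fun z hz =>
    (hsplit z hz).elim (fun h => hab.1.trans (h.mono hDG')) (fun h => hab.2.trans (h.mono hDG'))
  refine ⟨?_, ?_, ?_, fun y hy z hz => (hreach y hy).symm.trans (hreach z hz)⟩
  · simp only [Finset.mem_insert, Finset.mem_erase]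
    rintro e (rfl | ⟨-, he⟩) y hy
    · rcases Sym2.mem_iff.1 hy with rfl | rfl <;> assumption
    · exact hT.1 e he y hy
  · simp only [Finset.mem_insert, Finset.mem_erase]
    rintro e (rfl | ⟨-, he⟩)
    · simpa using hne
    · exact hT.2.1 e he
  · rw [Finset.card_insert_of_notMem hnotin, Finset.card_erase_of_mem hx, ← hT.2.2.1]
    have := Finset.card_pos.2 ⟨_, hx⟩
    omega

theorem IsTreeOn.exists_exchange [DecidableEq V] {T₁ T₂ : Finset (Sym2 V)} {e : Sym2 V}
    (h₁ : IsTreeOn A T₁) (h₂ : IsTreeOn A T₂) (he₂ : e ∈ T₂) (he₁ : e ∉ T₁) :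
    ∃ x ∈ T₁, x ∉ T₂ ∧ IsTreeOn A (insert e (T₁.erase x)) ∧
      IsTreeOn A (insert x (T₂.erase e)) := by
  induction e with | h u v => ?_
  have hu : u ∈ A := h₂.1 _ he₂ u (Sym2.mem_mk_left u v)
  have hv : v ∈ A := h₂.1 _ he₂ v (Sym2.mem_mk_right u v)
  have huv : u ≠ v := fun h => h₂.2.1 _ he₂ (Sym2.mk_isDiag_iff.2 h)
  set D := (fromEdgeSet (T₂ : Set (Sym2 V))).deleteEdges {s(u, v)}
  have hsep : ¬ D.Reachable u v :=
    isAcyclic_iff_forall_adj_isBridge.1 h₂.isAcyclic ((fromEdgeSet_adj _).2 ⟨he₂, huv⟩)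
  -- the `T₁`-path from `u` to `v` leaves the side of `u` in `T₂ - uv` along some edge `d.edge`
  obtain ⟨P, hP⟩ := (h₁.2.2.2 u hu v hv).exists_isPath
  obtain ⟨d, hd, hdu, hdv⟩ := P.exists_boundary_dart {z | D.Reachable u z} .rfl hsep
  have hdP : d.edge ∈ P.edges := P.edges_eq_map_darts ▸ List.mem_map_of_mem hd
  have hdT₁ : d.edge ∈ T₁ := ((edgeSet_fromEdgeSet _ ▸ P.edges_subset_edgeSet hdP :)).1
  have hdT₂ : d.edge ∉ T₂ := fun h => hdv <| hdu.trans <| Adj.reachable <| by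
    simp only [D, ← fromEdgeSet_erase, fromEdgeSet_adj]
    exact ⟨Finset.mem_erase.2 ⟨fun h' => he₁ (h' ▸ hdT₁), h⟩, d.adj.ne⟩
  have hdA : ∀ z ∈ d.edge, z ∈ A := h₁.1 _ hdT₁
  exact ⟨d.edge, hdT₁, hdT₂,
    h₁.insert_erase hdT₁ hu hv (h₁.isAcyclic.not_reachable_deleteEdges hP hdP),
    h₂.insert_erase he₂ (hdA _ (Sym2.mem_mk_left _ _)) (hdA _ (Sym2.mem_mk_right _ _))
      fun h => hdv (hdu.trans h)⟩

end Trees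

section EdgeCost

variable {V : Type*} {T : Finset (Sym2 V)}

theorem edgeCost_mono {a a' : Sym2 V → ℝ} (h : a' ≤ a) (T : Finset (Sym2 V)) :
    edgeCost a' T ≤ edgeCost a T :=
  Finset.sum_le_sum fun x _ => h x

variable [DecidableEq V]

theorem edgeCost_update_of_notMem (a : Sym2 V → ℝ) {e : Sym2 V} (t : ℝ) (he : e ∉ T) :
    edgeCost (Function.update a e t) T = edgeCost a T :=
  Finset.sum_update_of_notMem he a t

theorem edgeCost_update_of_mem (a : Sym2 V → ℝ) {e : Sym2 V} (t : ℝ) (he : e ∈ T) :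
    edgeCost (Function.update a e t) T + a e = edgeCost a T + t := by
  rw [edgeCost, edgeCost, Finset.sum_update_of_mem he,
    Finset.sum_eq_add_sum_sdiff_singleton_of_mem he]
  ring

theorem edgeCost_insert_erase (a : Sym2 V → ℝ) {x y : Sym2 V} (hx : x ∈ T) (hy : y ∉ T) :
    edgeCost a (insert y (T.erase x)) + a x = edgeCost a T + a y := by
  rw [edgeCost, edgeCost, Finset.sum_insert fun h => hy (Finset.mem_of_mem_erase h),
    ← Finset.sum_erase_add _ _ hx]
  ring

end EdgeCost

section MinimumSpanningTree

variable {V : Type*} {A : Finset V}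

theorem finite_setOf_isTreeOn : {T | IsTreeOn A T}.Finite :=
  A.sym2.powerset.finite_toSet.subset fun _ hT =>
    Finset.mem_powerset.2 fun e he => Finset.mem_sym2_iff.2 (hT.1 e he)

theorem mstCostOn_le (w : Sym2 V → ℝ) {T : Finset (Sym2 V)} (hT : IsTreeOn A T) :
    mstCostOn w A ≤ edgeCost w T :=
  csInf_le (finite_setOf_isTreeOn.image _).bddBelow ⟨T, hT, rfl⟩

theorem exists_isTreeOn_edgeCost_eq_mstCostOn (w : Sym2 V → ℝ) (h : ∃ T, IsTreeOn A T) :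
    ∃ T, IsTreeOn A T ∧ edgeCost w T = mstCostOn w A :=
  Set.Nonempty.csInf_mem (Set.Nonempty.image _ h) (finite_setOf_isTreeOn.image _)

theorem mstCostOn_eq_zero (w : Sym2 V → ℝ) (h : ¬ ∃ T, IsTreeOn A T) : mstCostOn w A = 0 := by
  have hempty : {T | IsTreeOn A T} = ∅ := Set.eq_empty_of_forall_notMem (not_exists.1 h)
  simp [mstCostOn, hempty]

theorem mstCostOn_mono {a a' : Sym2 V → ℝ} (h : a' ≤ a) : mstCostOn a' A ≤ mstCostOn a A := by
  by_cases htree : ∃ T, IsTreeOn A T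
  · obtain ⟨T, hT, hcost⟩ := exists_isTreeOn_edgeCost_eq_mstCostOn a htree
    exact hcost ▸ (mstCostOn_le a' hT).trans (edgeCost_mono h T)
  · simp [mstCostOn_eq_zero _ htree]

theorem mstCostOn_add_le_of_exchange {a a' b b' : Sym2 V → ℝ}
    (h : ∀ T₁ T₂, IsTreeOn A T₁ → IsTreeOn A T₂ → ∃ T₁' T₂', IsTreeOn A T₁' ∧ IsTreeOn A T₂' ∧
      edgeCost a' T₁' + edgeCost b T₂' ≤ edgeCost a T₁ + edgeCost b' T₂) :
    mstCostOn a' A + mstCostOn b A ≤ mstCostOn a A + mstCostOn b' A := by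
  by_cases htree : ∃ T, IsTreeOn A T
  · obtain ⟨T₁, h₁, hc₁⟩ := exists_isTreeOn_edgeCost_eq_mstCostOn a htree
    obtain ⟨T₂, h₂, hc₂⟩ := exists_isTreeOn_edgeCost_eq_mstCostOn b' htree
    obtain ⟨T₁', T₂', h₁', h₂', hle⟩ := h T₁ T₂ h₁ h₂
    linarith [mstCostOn_le a' h₁', mstCostOn_le b h₂']
  · simp [mstCostOn_eq_zero _ htree]

theorem mstCostOn_update_add_le [DecidableEq V] {a b : Sym2 V → ℝ} {e : Sym2 V} {t : ℝ}
    (ht : t ≤ a e) (hba : b ≤ a) (hbe : b e = a e) :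
    mstCostOn (Function.update a e t) A + mstCostOn b A ≤
      mstCostOn a A + mstCostOn (Function.update b e t) A := by
  refine mstCostOn_add_le_of_exchange fun T₁ T₂ h₁ h₂ => ?_
  by_cases he₂ : e ∈ T₂
  · by_cases he₁ : e ∈ T₁
    · exact ⟨T₁, T₂, h₁, h₂, by
        linarith [edgeCost_update_of_mem a t he₁, edgeCost_update_of_mem b t he₂]⟩
    · obtain ⟨x, hx₁, hx₂, h₁', h₂'⟩ := h₁.exists_exchange h₂ he₂ he₁
      have hxe : x ≠ e := fun h => he₁ (h ▸ hx₁)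
      refine ⟨_, _, h₁', h₂', ?_⟩
      have c₁ := edgeCost_insert_erase (Function.update a e t) hx₁ he₁
      have c₂ := edgeCost_insert_erase b he₂ hx₂
      rw [edgeCost_update_of_notMem a t he₁, Function.update_self,
        Function.update_of_ne hxe] at c₁
      linarith [edgeCost_update_of_mem b t he₂, hba x]
  · exact ⟨T₁, T₂, h₁, h₂, by
      linarith [edgeCost_mono (update_le_self_iff.2 ht) T₁, edgeCost_update_of_notMem b t he₂]⟩

end MinimumSpanningTree

section Contraction

variable {V : Type*} {S : Finset V}

theorem contractWeight_le {w : Sym2 V → ℝ} (hw : ∀ e ∈ Rpairs S, 0 ≤ w e) :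
    contractWeight w S ≤ w := fun e => by
  unfold contractWeight
  split_ifs with h
  exacts [hw e h, le_rfl]

theorem contractWeight_of_notMem (w : Sym2 V → ℝ) {e : Sym2 V} (he : e ∉ Rpairs S) :
    contractWeight w S e = w e :=
  if_neg he

variable [DecidableEq V]

theorem contractWeight_update_of_mem (w : Sym2 V → ℝ) {e : Sym2 V} (t : ℝ) (he : e ∈ Rpairs S) :
    contractWeight (Function.update w e t) S = contractWeight w S := by
  funext x
  by_cases hx : x ∈ Rpairs S
  · simp [contractWeight, hx]
  · have hxe : x ≠ e := fun h => hx (h ▸ he)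
    simp [contractWeight, hx, hxe]

theorem contractWeight_update_of_notMem (w : Sym2 V → ℝ) {e : Sym2 V} (t : ℝ)
    (he : e ∉ Rpairs S) :
    contractWeight (Function.update w e t) S = Function.update (contractWeight w S) e t := by
  funext x
  by_cases hxe : x = e
  · subst hxe
    simp [contractWeight, he]
  · simp [contractWeight, hxe]

end Contraction

theorem save_monotone_add_edge_general
    (w : Sym2 V → ℝ) (hw : ∀ e, 0 ≤ w e)
    (R : Finset V) (u v : V)
    (de : ℝ)
    (S : Finset V) :
    saveOn (fun e => if e = s(u, v) then min (w e) de else w e) R S ≤ saveOn w R S := by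
  have hupdate : (fun e => if e = s(u, v) then min (w e) de else w e) =
      Function.update w s(u, v) (min (w s(u, v)) de) := by
    funext e
    rw [Function.update_apply]
    split_ifs with h <;> simp [h]
  have ht : min (w s(u, v)) de ≤ w s(u, v) := min_le_left _ _
  rw [hupdate, saveOn, saveOn]
  by_cases he : s(u, v) ∈ Rpairs S
  · rw [contractWeight_update_of_mem _ _ he]
    linarith [mstCostOn_mono (A := R) (update_le_self_iff.2 ht)]
  · rw [contractWeight_update_of_notMem _ _ he]
    linarith [mstCostOn_update_add_le (A := R) ht (contractWeight_le fun e _ => hw e)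
      (contractWeight_of_notMem w he)]

/-- Let `M` be the weighted complete graph on the terminal set `R`
(weights `w`), let `u ≠ v` be terminals and let `M_e` be `M` with an additional
parallel edge `{u,v}` of arbitrary nonnegative cost `de` (modeled by lowering the
weight of the pair `{u,v}` to `min (w {u,v}) de`).  Then for every full component,
i.e. for every terminal set `S ⊆ R`, we have `save(M, C) ≥ save(M_e, C)`. -/
theorem save_monotone_add_edge
    (w : Sym2 V → ℝ) (hw : ∀ e, 0 ≤ w e)
    (R : Finset V) (u v : V) (hu : u ∈ R) (hv : v ∈ R) (huv : u ≠ v)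
    (de : ℝ) (hde : 0 ≤ de)
    (S : Finset V) (hS : S ⊆ R) :
    saveOn (fun e => if e = s(u, v) then min (w e) de else w e) R S ≤ saveOn w R S :=
  save_monotone_add_edge_general w hw R u v de S
end

section
/- Pruning of full leaf components preserves LP feasibility: let x̄ be a feasible solution to the subtour elimination relaxation SER for terminal set R, and let C* be a chosen full component (x̄_{C*} > 0) whose terminal set R_{C*} shares exactly one terminal v* with the union of terminal sets of all other chosen full components. Then x̄_{C*} = 1, and the solution obtained by setting x̄_{C*} := 0 is feasible for SER on the reduced terminal set R \ (R_{C*} \ {v*}). -/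
/-!
A terminal `u ≠ v*` of `R_{C*}` lies in no other chosen component, so the covering constraint
at `u` reads `x_{C*} ≥ 1`, whence `x_{C*} = 1`. Dropping `C*` then lowers the left side of the
spanning constraint by `|R_{C*}| - 1`, which is exactly the number of removed terminals. The
subtour elimination constraints have nonnegative coefficients, so they survive any decrease of
`x`, in particular on subsets of the reduced terminal set.
-/

open Finset Function

section Update

variable {ι R : Type*} [Fintype ι] [DecidableEq ι] [Ring R]

theorem sum_mul_update_zero (w x : ι → R) (j : ι) :
    ∑ i, w i * update x j 0 i = ∑ i, w i * x i - w j * x j := by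
  rw [← add_sum_erase _ _ (mem_univ j), ← add_sum_erase _ (fun i => w i * x i) (mem_univ j),
    update_self, mul_zero, zero_add, add_sub_cancel_left]
  exact sum_congr rfl fun i hi => by rw [update_of_ne (ne_of_mem_erase hi)]

end Update

theorem eq_one_of_sole_cover {ι : Type*} {s : Finset ι} {x : ι → ℝ} {j : ι} (hj : j ∈ s)
    (hle : x j ≤ 1) (hcover : 1 ≤ ∑ i ∈ s, x i) (hothers : ∀ i ∈ s, i ≠ j → x i = 0) :
    x j = 1 := by
  rw [sum_eq_single_of_mem j hj hothers] at hcover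
  exact le_antisymm hle hcover

section Components

variable {ι V : Type*} [Fintype ι] [DecidableEq V] (Rset : ι → Finset V)

theorem eq_zero_of_mem_of_leaf [DecidableEq ι] {x : ι → ℝ} (hx : ∀ i, 0 ≤ x i) {j : ι} {v : V}
    (hleaf : Rset j ∩ (univ.filter fun i => i ≠ j ∧ 0 < x i).biUnion Rset = {v})
    {u : V} (hu : u ∈ Rset j) (huv : u ≠ v) {i : ι} (hij : i ≠ j) (hui : u ∈ Rset i) :
    x i = 0 := by
  by_contra hxi
  have hmem : u ∈ Rset j ∩ (univ.filter fun i => i ≠ j ∧ 0 < x i).biUnion Rset :=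
    mem_inter.2 ⟨hu, mem_biUnion.2 ⟨i, by simp [hij, (hx i).lt_of_ne' hxi], hui⟩⟩
  rw [hleaf, mem_singleton] at hmem
  exact huv hmem

theorem subtour_sum_mono (R' : Finset V) {x y : ι → ℝ} (hxy : x ≤ y) :
    ∑ i ∈ univ.filter (fun i => (R' ∩ Rset i).Nonempty), ((#(R' ∩ Rset i) : ℝ) - 1) * x i ≤
      ∑ i ∈ univ.filter (fun i => (R' ∩ Rset i).Nonempty), ((#(R' ∩ Rset i) : ℝ) - 1) * y i := by
  refine sum_le_sum fun i hi => mul_le_mul_of_nonneg_left (hxy i) ?_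
  have hone : (1 : ℝ) ≤ #(R' ∩ Rset i) := by exact_mod_cast one_le_card.2 (mem_filter.1 hi).2
  linarith

end Components

theorem cast_card_sdiff_sdiff_singleton {V : Type*} [DecidableEq V] {S T : Finset V} {v : V}
    (hST : S ⊆ T) (hv : v ∈ S) : (#(T \ (S \ {v})) : ℝ) = #T - #S + 1 := by
  rw [cast_card_sdiff (sdiff_subset.trans hST), sdiff_singleton_eq_erase,
    cast_card_erase_of_mem hv]
  ring

open scoped Classical in
theorem prune_full_leaf_component_general
    {V : Type*} [DecidableEq V]
    {ι : Type*} [Fintype ι] [DecidableEq ι]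
    (R : Finset V) (Rset : ι → Finset V) (x : ι → ℝ)
    (hsub : ∀ i, Rset i ⊆ R) (hcard : ∀ i, 2 ≤ (Rset i).card)
    (hbounds : ∀ i, 0 ≤ x i ∧ x i ≤ 1)
    (hspan : ∑ i, (((Rset i).card : ℝ) - 1) * x i = (R.card : ℝ) - 1)
    (hsubtour : ∀ R' ⊆ R, 2 ≤ R'.card →
      ∑ i ∈ Finset.univ.filter (fun i => (R' ∩ Rset i).Nonempty),
          (((R' ∩ Rset i).card : ℝ) - 1) * x i ≤ (R'.card : ℝ) - 1)
    (hcover : ∀ v ∈ R, 1 ≤ ∑ i ∈ Finset.univ.filter (fun i => v ∈ Rset i), x i)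
    (istar : ι) (vstar : V) (hvstar : vstar ∈ Rset istar)
    (hleaf : Rset istar ∩
        ((Finset.univ.filter (fun j => j ≠ istar ∧ 0 < x j)).biUnion Rset) = {vstar}) :
    x istar = 1 ∧
    (∀ i, 0 ≤ Function.update x istar 0 i ∧ Function.update x istar 0 i ≤ 1) ∧
    (∑ i, (((Rset i).card : ℝ) - 1) * Function.update x istar 0 i
        = (((R \ (Rset istar \ {vstar})).card : ℝ)) - 1) ∧
    (∀ R' ⊆ R \ (Rset istar \ {vstar}), 2 ≤ R'.card →
      ∑ i ∈ Finset.univ.filter (fun i => (R' ∩ Rset i).Nonempty),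
          (((R' ∩ Rset i).card : ℝ) - 1) * Function.update x istar 0 i
        ≤ (R'.card : ℝ) - 1) := by
  have hnonneg i := (hbounds i).1
  obtain ⟨u, hu, huv⟩ := exists_mem_ne (hcard istar) vstar
  have hone : x istar = 1 :=
    eq_one_of_sole_cover (mem_filter.2 ⟨mem_univ _, hu⟩) (hbounds istar).2
      (hcover u (hsub istar hu)) fun i hi hne =>
        eq_zero_of_mem_of_leaf Rset hnonneg hleaf hu huv hne (mem_filter.1 hi).2
  have hdecrease : update x istar 0 ≤ x := update_le_iff.2 ⟨hnonneg istar, fun _ _ => le_rfl⟩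
  have hupdate_nonneg : 0 ≤ update x istar 0 := le_update_iff.2 ⟨le_rfl, fun i _ => hnonneg i⟩
  refine ⟨hone, fun i => ⟨hupdate_nonneg i, (hdecrease i).trans (hbounds i).2⟩, ?_,
    fun R' hR' h2 => ?_⟩
  · rw [sum_mul_update_zero, hspan, hone, cast_card_sdiff_sdiff_singleton (hsub istar) hvstar]
    ring
  · exact (subtour_sum_mono Rset R' hdecrease).trans (hsubtour R' (hR'.trans sdiff_subset) h2)

open scoped Classical in
/-- Pruning of full leaf components preserves SER feasibility.
`ι` indexes the `k`-restricted full components, `Rset i ⊆ R` their terminal sets,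
and `x` a feasible SER solution (bounds, spanning constraint, subtour elimination
constraints, and the valid covering constraints).  If a chosen component `istar`
(`x istar > 0`) shares exactly one terminal `vstar` with the union of the terminal sets
of all other chosen components, then `x istar = 1`, and setting `x istar := 0` yields a
feasible SER solution for the reduced terminal set `R \ (Rset istar \ {vstar})`. -/
theorem prune_full_leaf_component
    {V : Type*} [Fintype V] [DecidableEq V]
    {ι : Type*} [Fintype ι] [DecidableEq ι]
    (R : Finset V) (Rset : ι → Finset V) (x : ι → ℝ)
    (hsub : ∀ i, Rset i ⊆ R) (hcard : ∀ i, 2 ≤ (Rset i).card)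
    (hbounds : ∀ i, 0 ≤ x i ∧ x i ≤ 1)
    (hspan : ∑ i, (((Rset i).card : ℝ) - 1) * x i = (R.card : ℝ) - 1)
    (hsubtour : ∀ R' ⊆ R, 2 ≤ R'.card →
      ∑ i ∈ Finset.univ.filter (fun i => (R' ∩ Rset i).Nonempty),
          (((R' ∩ Rset i).card : ℝ) - 1) * x i ≤ (R'.card : ℝ) - 1)
    (hcover : ∀ v ∈ R, 1 ≤ ∑ i ∈ Finset.univ.filter (fun i => v ∈ Rset i), x i)
    (istar : ι) (hpos : 0 < x istar) (vstar : V) (hvstar : vstar ∈ Rset istar)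
    (hleaf : Rset istar ∩
        ((Finset.univ.filter (fun j => j ≠ istar ∧ 0 < x j)).biUnion Rset) = {vstar}) :
    x istar = 1 ∧
    (∀ i, 0 ≤ Function.update x istar 0 i ∧ Function.update x istar 0 i ≤ 1) ∧
    (∑ i, (((Rset i).card : ℝ) - 1) * Function.update x istar 0 i
        = (((R \ (Rset istar \ {vstar})).card : ℝ)) - 1) ∧
    (∀ R' ⊆ R \ (Rset istar \ {vstar}), 2 ≤ R'.card →
      ∑ i ∈ Finset.univ.filter (fun i => (R' ∩ Rset i).Nonempty),
          (((R' ∩ Rset i).card : ℝ) - 1) * Function.update x istar 0 i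
        ≤ (R'.card : ℝ) - 1) :=
  prune_full_leaf_component_general R Rset x hsub hcard hbounds hspan hsubtour hcover istar vstar
    hvstar hleaf
end

section
/- In the cycle gadget instance, the fractional vector x̄ with x̄_C = k/(k²−1) for every full component C with |R_C| = k and x̄_C = 0 otherwise is feasible for SER, satisfies Σ_C (|R_C|−1) x̄_C = k = |R|−1, and has objective value Σ_C |R_C| x̄_C = (k³+k²)/(k²−1). -/
open Finset

/-- The full components of the cycle gadget on `k+1` terminals: every subset of
terminals of cardinality between `2` and `k` spans exactly one (cheapest) full
component, of cost equal to its number of terminals. -/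
abbrev GadgetComp (k : ℕ) := {A : Finset (Fin (k + 1)) // 2 ≤ A.card ∧ A.card ≤ k}

/-- SER feasibility for the cycle gadget: variable bounds, the spanning constraint
`Σ (|R_C| − 1) x_C = |R| − 1 = k`, and the subtour elimination constraints. -/
def GadgetSERFeasible (k : ℕ) (x : GadgetComp k → ℝ) : Prop :=
  (∀ A, 0 ≤ x A ∧ x A ≤ 1) ∧
  (∑ A : GadgetComp k, ((A.1.card : ℝ) - 1) * x A = k) ∧
  ∀ R' : Finset (Fin (k + 1)), 2 ≤ R'.card →
    ∑ A ∈ Finset.univ.filter (fun A : GadgetComp k => (R' ∩ A.1).Nonempty),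
        (((R' ∩ A.1).card : ℝ) - 1) * x A ≤ (R'.card : ℝ) - 1

/-- SER objective for the cycle gadget: each component `C` costs `|R_C|`. -/
def GadgetObj (k : ℕ) (x : GadgetComp k → ℝ) : ℝ :=
  ∑ A : GadgetComp k, (A.1.card : ℝ) * x A

/-- The additional clique constraints: any family of components pairwise sharing at
least two terminals has total weight at most `1`. -/
def GadgetCliqueFeasible (k : ℕ) (x : GadgetComp k → ℝ) : Prop :=
  ∀ F : Finset (GadgetComp k),
    (∀ A ∈ F, ∀ B ∈ F, A ≠ B → 2 ≤ (A.1 ∩ B.1).card) → ∑ A ∈ F, x A ≤ 1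

open Classical in
/-- The fractional solution of the cycle gadget: weight `k/(k²−1)` on each of the
`k+1` components with exactly `k` terminals, `0` otherwise. -/
noncomputable def gadgetXbar (k : ℕ) : GadgetComp k → ℝ :=
  fun A => if A.1.card = k then (k : ℝ) / ((k : ℝ) ^ 2 - 1) else 0

/-!
`x̄` lives on the `k + 1` components `R ∖ {t_i}`, so every constraint of SER becomes a sum over
the omitted terminal `i`, with weight `k / (k² − 1)`. The spanning sum and the objective are then
`(k + 1)(k − 1)` and `(k + 1) k` times that weight. For a subtour set `R'` with `r` terminals,
`R' ∩ (R ∖ {t_i})` has `r − 1` terminals for the `r` indices `i ∈ R'` and `r` for the others, so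
the left-hand side is `k ((k + 1)(r − 1) − r) / (k² − 1)`, which is at most `r − 1` exactly
when `r ≤ k + 1`.
-/

theorem Finset.sum_filter_card_add_one_eq_sum_univ_erase {α M : Type*} [Fintype α]
    [DecidableEq α] [AddCommMonoid M] (g : Finset α → M) :
    ∑ A with #A + 1 = Fintype.card α, g A = ∑ i, g (univ.erase i) := by
  calc ∑ A with #A + 1 = Fintype.card α, g A
      = ∑ B ∈ powersetCard 1 univ, g Bᶜ := by
        refine sum_nbij' compl compl (fun A hA => ?_) (fun B hB => ?_)
          (fun A _ => compl_compl A) (fun B _ => compl_compl B) (fun A _ => by rw [compl_compl])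
        · simp only [mem_filter, mem_univ, true_and] at hA
          simp only [mem_powersetCard, subset_univ, card_compl, true_and]
          omega
        · simp only [mem_powersetCard, subset_univ, true_and] at hB
          have := card_le_univ B
          simp only [mem_filter, mem_univ, card_compl, true_and]
          omega
    _ = ∑ i, g (univ.erase i) := by simp [powersetCard_one, compl_singleton]

theorem Finset.sum_card_erase_add_card {α : Type*} [Fintype α] [DecidableEq α] (s : Finset α) :
    ∑ i, #(s.erase i) + #s = Fintype.card α * #s := by
  have hterm (i : α) : #(s.erase i) + (if i ∈ s then 1 else 0) = #s := by
    split_ifs with h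
    · exact card_erase_add_one h
    · rw [erase_eq_of_notMem h, add_zero]
  calc ∑ i, #(s.erase i) + #s = ∑ i, (#(s.erase i) + if i ∈ s then 1 else 0) := by
        rw [sum_add_distrib, sum_ite_mem, univ_inter, sum_const, smul_eq_mul, mul_one]
    _ = Fintype.card α * #s := by simp [hterm]

theorem Fin.card_univ_erase {n : ℕ} (i : Fin (n + 1)) : #(univ.erase i) = n := by
  simp [card_erase_of_mem]

lemma sum_mul_gadgetXbar (k : ℕ) (hk : 2 ≤ k) (c : Finset (Fin (k + 1)) → ℝ) :
    ∑ A : GadgetComp k, c A.1 * gadgetXbar k A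
      = k / ((k : ℝ) ^ 2 - 1) * ∑ i, c (univ.erase i) := by
  have hsub : ∑ A : GadgetComp k, c A.1 * gadgetXbar k A
      = ∑ A with 2 ≤ #A ∧ #A ≤ k, c A * if #A = k then (k : ℝ) / ((k : ℝ) ^ 2 - 1) else 0 :=
    (sum_subtype _ (by simp) (fun A => c A * if #A = k then _ else 0)).symm
  rw [hsub, mul_sum,
    ← sum_filter_card_add_one_eq_sum_univ_erase (fun A => (k : ℝ) / ((k : ℝ) ^ 2 - 1) * c A),
    Fintype.card_fin, sum_filter, sum_filter]
  refine sum_congr rfl fun A _ => ?_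
  by_cases hA : #A = k
  · simp [hA, hk, mul_comm]
  · simp [hA]

lemma gadgetXbar_mem_unitInterval (k : ℕ) (hk : 2 ≤ k) (A : GadgetComp k) :
    0 ≤ gadgetXbar k A ∧ gadgetXbar k A ≤ 1 := by
  have hk' : (2 : ℝ) ≤ k := by exact_mod_cast hk
  have hden : 0 < (k : ℝ) ^ 2 - 1 := by nlinarith
  unfold gadgetXbar
  split_ifs
  · exact ⟨by positivity, (div_le_one hden).2 (by nlinarith)⟩
  · simp

lemma gadgetXbar_spanning (k : ℕ) (hk : 2 ≤ k) :
    ∑ A : GadgetComp k, ((A.1.card : ℝ) - 1) * gadgetXbar k A = k := by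
  have hk' : (2 : ℝ) ≤ k := by exact_mod_cast hk
  have hden : (k : ℝ) ^ 2 - 1 ≠ 0 := by nlinarith
  rw [sum_mul_gadgetXbar k hk fun B => (#B : ℝ) - 1]
  simp only [Fin.card_univ_erase, sum_const, card_univ, Fintype.card_fin, nsmul_eq_mul]
  push_cast
  field_simp
  ring

lemma gadgetObj_gadgetXbar (k : ℕ) (hk : 2 ≤ k) :
    GadgetObj k (gadgetXbar k) = ((k : ℝ) ^ 3 + (k : ℝ) ^ 2) / ((k : ℝ) ^ 2 - 1) := by
  rw [GadgetObj, sum_mul_gadgetXbar k hk fun B => (#B : ℝ)]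
  simp only [Fin.card_univ_erase, sum_const, card_univ, Fintype.card_fin, nsmul_eq_mul]
  push_cast
  ring

lemma gadgetXbar_subtour (k : ℕ) (hk : 2 ≤ k) (R' : Finset (Fin (k + 1))) (hR' : 2 ≤ #R') :
    ∑ A ∈ univ.filter (fun A : GadgetComp k => (R' ∩ A.1).Nonempty),
        ((#(R' ∩ A.1) : ℝ) - 1) * gadgetXbar k A ≤ (#R' : ℝ) - 1 := by
  have hk' : (2 : ℝ) ≤ k := by exact_mod_cast hk
  have hden : 0 < (k : ℝ) ^ 2 - 1 := by nlinarith
  have hr : (#R' : ℝ) ≤ k + 1 := by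
    exact_mod_cast (card_le_univ R').trans_eq (Fintype.card_fin _)
  have hinter (i : Fin (k + 1)) : R' ∩ univ.erase i = R'.erase i := by
    rw [inter_erase, inter_univ]
  have hnonempty (i : Fin (k + 1)) : (R'.erase i).Nonempty := by
    have := pred_card_le_card_erase (s := R') (a := i)
    rw [← card_pos]; omega
  have hcount : ∑ i : Fin (k + 1), ((#(R'.erase i) : ℝ) - 1) = (k + 1) * (#R' - 1) - #R' := by
    have hsum : ∑ i : Fin (k + 1), (#(R'.erase i) : ℝ) + #R' = (k + 1) * #R' := by
      exact_mod_cast Fintype.card_fin (k + 1) ▸ sum_card_erase_add_card R'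
    rw [sum_sub_distrib, sum_const, card_univ, Fintype.card_fin, nsmul_eq_mul]
    push_cast; linarith
  rw [sum_filter]
  simp_rw [← ite_zero_mul]
  rw [sum_mul_gadgetXbar k hk fun B => if (R' ∩ B).Nonempty then (#(R' ∩ B) : ℝ) - 1 else 0]
  simp only [hinter, hnonempty, if_true, hcount]
  rw [div_mul_eq_mul_div, div_le_iff₀ hden]
  -- cleared of denominators, this is `(k + 1) (#R' - 1) ≤ k #R'`, i.e. `#R' ≤ k + 1`
  nlinarith

/-- In the cycle gadget instance the fractional vector `x̄` with
`x̄_C = k/(k²−1)` for `|R_C| = k` and `0` otherwise is feasible for SER, satisfies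
the spanning constraint `Σ (|R_C|−1) x̄_C = k = |R|−1`, and has objective value
`(k³+k²)/(k²−1)`. -/
theorem gadget_xbar_feasible (k : ℕ) (hk : 2 ≤ k) :
    GadgetSERFeasible k (gadgetXbar k) ∧
    (∑ A : GadgetComp k, ((A.1.card : ℝ) - 1) * gadgetXbar k A = k) ∧
    GadgetObj k (gadgetXbar k) = ((k : ℝ) ^ 3 + (k : ℝ) ^ 2) / ((k : ℝ) ^ 2 - 1) := by
  exact ⟨⟨gadgetXbar_mem_unitInterval k hk, gadgetXbar_spanning k hk, gadgetXbar_subtour k hk⟩,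
    gadgetXbar_spanning k hk, gadgetObj_gadgetXbar k hk⟩
end

section
/- In any feasible solution to SER on the cycle gadget, decreasing the total weight X_k of k-terminal components by ε > 0 while maintaining the spanning constraint Σ_{ℓ=2}^{k}(ℓ−1)X_ℓ = k by increasing weights X_i of i-terminal components (i < k) increases the objective Σ_{ℓ=2}^{k} ℓ X_ℓ by at least ε/(k−2). -/
open Finset

/-- In the cycle gadget, let `X ℓ` (for `2 ≤ ℓ ≤ k`) be the total
LP weight on components with exactly `ℓ` terminals; each such component costs `ℓ`,
so the spanning constraint reads `Σ (ℓ−1) X ℓ = k` and the objective is `Σ ℓ X ℓ`.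
If the weight on `k`-terminal components is decreased by `ε > 0` while the spanning
constraint is maintained by increasing the weights `X i` (`i < k`), the objective
increases by at least `ε/(k−2)`. -/
theorem decrease_Xk_increases_objective
    (k : ℕ) (hk : 3 ≤ k) (X X' : ℕ → ℝ) (ε : ℝ) (hε : 0 < ε)
    (hspan : ∑ ℓ ∈ Finset.Icc 2 k, ((ℓ : ℝ) - 1) * X ℓ = k)
    (hspan' : ∑ ℓ ∈ Finset.Icc 2 k, ((ℓ : ℝ) - 1) * X' ℓ = k)
    (hdec : X' k = X k - ε)
    (hinc : ∀ i ∈ Finset.Icc 2 (k - 1), X i ≤ X' i) :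
    (∑ ℓ ∈ Finset.Icc 2 k, (ℓ : ℝ) * X ℓ) + ε / ((k : ℝ) - 2)
      ≤ ∑ ℓ ∈ Finset.Icc 2 k, (ℓ : ℝ) * X' ℓ := by
  obtain ⟨m, rfl⟩ : ∃ m, k = m + 1 := ⟨k - 1, by omega⟩
  have hm : 2 ≤ m := by omega
  simp only [Nat.add_sub_cancel] at hinc
  have hk3 : (3:ℝ) ≤ ((m:ℝ) + 1) := by
    have : (2:ℝ) ≤ (m:ℝ) := by exact_mod_cast hm
    linarith
  have hc : (0:ℝ) < ((m:ℝ) + 1) - 2 := by linarith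
  have hsplit : ∀ f : ℕ → ℝ, ∑ ℓ ∈ Finset.Icc 2 (m+1), f ℓ
      = (∑ ℓ ∈ Finset.Icc 2 m, f ℓ) + f (m+1) :=
    fun f => Finset.sum_Icc_succ_top (by omega) f
  have hcast : ((m+1 : ℕ) : ℝ) = (m:ℝ) + 1 := by push_cast; ring
  -- spanning constraints split
  have e1 : (∑ ℓ ∈ Finset.Icc 2 m, ((ℓ:ℝ)-1) * X' ℓ) + (((m:ℝ)+1)-1) * X' (m+1)
      = (m:ℝ) + 1 := by
    have := hsplit (fun ℓ => ((ℓ:ℝ)-1) * X' ℓ)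
    rw [this, hcast] at hspan'
    exact hspan'
  have e2 : (∑ ℓ ∈ Finset.Icc 2 m, ((ℓ:ℝ)-1) * X ℓ) + (((m:ℝ)+1)-1) * X (m+1)
      = (m:ℝ) + 1 := by
    have := hsplit (fun ℓ => ((ℓ:ℝ)-1) * X ℓ)
    rw [this, hcast] at hspan
    exact hspan
  have key : ∑ i ∈ Finset.Icc 2 m, ((i:ℝ)-1) * (X' i - X i) = (m:ℝ) * ε := by
    have hsub : ∑ i ∈ Finset.Icc 2 m, ((i:ℝ)-1) * (X' i - X i)
        = (∑ i ∈ Finset.Icc 2 m, ((i:ℝ)-1) * X' i)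
          - ∑ i ∈ Finset.Icc 2 m, ((i:ℝ)-1) * X i := by
      rw [← Finset.sum_sub_distrib]
      exact Finset.sum_congr rfl (fun i _ => by ring)
    rw [hdec] at e1
    rw [hsub]
    linarith [e1, e2]
  -- pointwise comparison
  have hb : ∑ i ∈ Finset.Icc 2 m, (((i:ℝ)-1)/((m:ℝ)-1)) * (X' i - X i)
      ≤ ∑ i ∈ Finset.Icc 2 m, (X' i - X i) := by
    apply Finset.sum_le_sum
    intro i hi
    have hd : 0 ≤ X' i - X i := by linarith [hinc i hi]
    have hi2 := Finset.mem_Icc.mp hi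
    have hile : (i:ℝ) ≤ (m:ℝ) := by exact_mod_cast hi2.2
    have hm1 : (0:ℝ) < (m:ℝ) - 1 := by linarith
    have hfrac : ((i:ℝ)-1)/((m:ℝ)-1) ≤ 1 := by
      rw [div_le_one hm1]; linarith
    nlinarith
  have hdiv : ∑ i ∈ Finset.Icc 2 m, (((i:ℝ)-1)/((m:ℝ)-1)) * (X' i - X i)
      = (∑ i ∈ Finset.Icc 2 m, ((i:ℝ)-1) * (X' i - X i)) / ((m:ℝ)-1) := by
    rw [Finset.sum_div]
    exact Finset.sum_congr rfl (fun i _ => by ring)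
  have hsd : (m:ℝ) * ε / ((m:ℝ)-1) ≤ ∑ i ∈ Finset.Icc 2 m, (X' i - X i) := by
    rw [hdiv, key] at hb; exact hb
  -- relate the i-weighted difference sum
  have hsid : ∑ i ∈ Finset.Icc 2 m, (i:ℝ) * (X' i - X i)
      = (m:ℝ) * ε + ∑ i ∈ Finset.Icc 2 m, (X' i - X i) := by
    have h : ∑ i ∈ Finset.Icc 2 m, (i:ℝ) * (X' i - X i)
        = (∑ i ∈ Finset.Icc 2 m, ((i:ℝ)-1) * (X' i - X i))
          + ∑ i ∈ Finset.Icc 2 m, (X' i - X i) := by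
      rw [← Finset.sum_add_distrib]
      exact Finset.sum_congr rfl (fun i _ => by ring)
    rw [h, key]
  have hsub2 : ∑ i ∈ Finset.Icc 2 m, (i:ℝ) * (X' i - X i)
      = (∑ i ∈ Finset.Icc 2 m, (i:ℝ) * X' i)
        - ∑ i ∈ Finset.Icc 2 m, (i:ℝ) * X i := by
    rw [← Finset.sum_sub_distrib]
    exact Finset.sum_congr rfl (fun i _ => by ring)
  -- objective splits
  have o1 : ∑ ℓ ∈ Finset.Icc 2 (m+1), (ℓ:ℝ) * X ℓ
      = (∑ ℓ ∈ Finset.Icc 2 m, (ℓ:ℝ) * X ℓ) + ((m+1:ℕ):ℝ) * X (m+1) :=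
    hsplit _
  have o2 : ∑ ℓ ∈ Finset.Icc 2 (m+1), (ℓ:ℝ) * X' ℓ
      = (∑ ℓ ∈ Finset.Icc 2 m, (ℓ:ℝ) * X' ℓ) + ((m+1:ℕ):ℝ) * X' (m+1) :=
    hsplit _
  rw [o1, o2, hcast, hdec]
  rw [hsub2] at hsid
  -- final arithmetic with the field identity
  have hm1 : (0:ℝ) < (m:ℝ) - 1 := by linarith
  have hfield : (m:ℝ) * ε / ((m:ℝ)-1) = ε + ε / (((m:ℝ)+1) - 2) := by
    have : ((m:ℝ)+1) - 2 = (m:ℝ) - 1 := by ring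
    rw [this]
    field_simp
    ring
  linarith [hsid, hsd]
end
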